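/- arXiv:1805.03428 — 2 statements merged into one kernel-verified Lean document; each statement's English description precedes it below -/
import Mathlib

section
/- Let I = I(C_{2n+1}) be the edge ideal of the odd cycle and w = x_1⋯x_{2n+1}, and m = (x_1,...,x_{2n+1}) the maximal homogeneous ideal. Then w·m ⊆ I^{n+1}. -/
/-!
Reading the cycle from `x_j`, the `2n + 2` variables `x_j, x_{j+1}, …, x_{j+2n+1} = x_j` list every
vertex once and `x_j` a second time, so `w · x_j` is the product of the `n + 1` edges
`x_{j+2k} x_{j+2k+1}`, `0 ≤ k ≤ n`.
-/

open MvPolynomial Finset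
open Fin.NatCast

theorem Finset.prod_range_two_mul {M : Type*} [CommMonoid M] (f : ℕ → M) (m : ℕ) :
    ∏ k ∈ range (2 * m), f k = ∏ k ∈ range m, f (2 * k) * f (2 * k + 1) := by
  induction m with
  | zero => simp
  | succ m ih => rw [Nat.mul_succ, prod_range_succ, prod_range_succ, prod_range_succ, ih, mul_assoc]

theorem Fin.prod_mul_apply_eq_prod_range_add {M : Type*} [CommMonoid M] {N : ℕ} [NeZero N]
    (f : Fin N → M) (j : Fin N) :
    (∏ i, f i) * f j = ∏ k ∈ range (N + 1), f (j + k) := by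
  have hrot : ∏ i, f i = ∏ k ∈ range N, f (j + k) := by
    rw [← Equiv.prod_comp (Equiv.addLeft j) f]
    simpa using Fin.prod_univ_eq_prod_range (fun k : ℕ => f (j + k)) N
  rw [hrot, prod_range_succ, Fin.natCast_self, add_zero]

theorem cycleProduct_mul_maximalIdeal_le_pow_general {K : Type*} [Field K] (n : ℕ)
    (I : Ideal (MvPolynomial (Fin (2 * n + 1)) K))
    (hI : I = Ideal.span {f | ∃ i : Fin (2 * n + 1), f = X i * X (i + 1)}) :
    Ideal.span {∏ i, X i} * Ideal.span (Set.range X) ≤ I ^ (n + 1) := by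
  rw [Ideal.span_mul_span, Ideal.span_le]
  rintro _ ⟨_, rfl, _, ⟨j, rfl⟩, rfl⟩
  have hedge (k : ℕ) : X (j + (2 * k : ℕ)) * X (j + (2 * k + 1 : ℕ)) ∈ I := by
    rw [hI]
    exact Ideal.subset_span ⟨j + (2 * k : ℕ), by push_cast; rw [add_assoc]⟩
  change (∏ i, X i) * X j ∈ I ^ (n + 1)
  rw [Fin.prod_mul_apply_eq_prod_range_add, show 2 * n + 1 + 1 = 2 * (n + 1) by ring,
    prod_range_two_mul]
  simpa only [prod_const, card_range] using
    Ideal.prod_mem_prod (s := range (n + 1)) (I := fun _ => I) fun k _ => hedge k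

theorem cycleProduct_mul_maximalIdeal_le_pow {K : Type*} [Field K] (n : ℕ) (hn : 1 ≤ n)
    (I : Ideal (MvPolynomial (Fin (2 * n + 1)) K))
    (hI : I = Ideal.span {f | ∃ i : Fin (2 * n + 1), f = X i * X (i + 1)}) :
    Ideal.span {∏ i, X i} * Ideal.span (Set.range X) ≤ I ^ (n + 1) :=
  cycleProduct_mul_maximalIdeal_le_pow_general n I hI
end

section
/- Let G be a unicyclic graph with unique cycle C_{2n+1} and edge ideal I = I(G). Then for all 1 ≤ s ≤ n, the symbolic and ordinary powers coincide: I^(s) = I^s. -/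
open MvPolynomial

/-- The edge ideal of a graph. -/
noncomputable def edgeIdeal (K : Type*) [Field K] {V : Type*} (G : SimpleGraph V) :
    Ideal (MvPolynomial V K) :=
  Ideal.span {f | ∃ u v, G.Adj u v ∧ f = X u * X v}

/-- The `s`-th symbolic power: the intersection of `s`-th powers of the
associated primes of `R/I`. -/
noncomputable def symbolicPower {R : Type*} [CommRing R] (I : Ideal R) (s : ℕ) : Ideal R :=
  ⨅ p ∈ associatedPrimes R (R ⧸ I), p ^ s

/-- `G` has `x 0, x 1, ..., x (2n)` as its unique cycle. -/
def HasUniqueOddCycle {V : Type*} (G : SimpleGraph V) (n : ℕ) (x : Fin (2 * n + 1) → V) : Prop :=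
  1 ≤ n ∧ Function.Injective x ∧ (∀ i, G.Adj (x i) (x (i + 1))) ∧
    ∀ (v : V) (c : G.Walk v v), c.IsCycle →
      {e | e ∈ c.edges} = Set.range (fun i : Fin (2 * n + 1) => s(x i, x (i + 1)))


/-!
For a minimal vertex cover `c` of `G`, the prime `P_c = (X v : v ∈ c)` is associated to `I(G)`:
it is the annihilator of the class of `∏_{v ∉ c} X v`. Hence every monomial `X^d` of an element
of `I^(s)` has weight `∑_{v ∈ c} d v ≥ s` on every vertex cover `c`, and it remains to find `s`
edges whose product divides `X^d`. If `d` vanishes at a vertex of the odd cycle, the edges of `G`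
inside the support of `d` form a forest, and a weighted König theorem for forests, proved by
removing a leaf edge, provides them. Otherwise `d` is positive on the whole cycle, whose
`2n + 1 > 2s` vertices carry `s` disjoint edges.
-/

open scoped Pointwise

namespace MvPolynomial

variable {σ R : Type*}

section CommSemiring

variable [CommSemiring R]

theorem span_monomial_pow (E : Set (σ →₀ ℕ)) (n : ℕ) :
    Ideal.span ((monomial · (1 : R)) '' E) ^ n = Ideal.span ((monomial · 1) '' (n • E)) := by
  induction n with
  | zero => simp [Ideal.one_eq_top]
  | succ n ih =>
    rw [pow_succ, ih, Ideal.span_mul_span', succ_nsmul, ← Set.image2_add, Set.image_image2,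
      ← Set.image2_mul, Set.image2_image_left, Set.image2_image_right]
    simp only [monomial_mul, mul_one]

theorem le_sum_of_mem_span_X_image_pow {c : Finset σ} {n : ℕ} {f : MvPolynomial σ R}
    (hf : f ∈ Ideal.span (X '' (c : Set σ)) ^ n) {d : σ →₀ ℕ} (hd : d ∈ f.support) :
    n ≤ ∑ i ∈ c, d i := by
  classical
  have hweight : ∀ k, ∀ e ∈ k • (Finsupp.single · 1) '' (c : Set σ), ∑ i ∈ c, e i = k := by
    intro k
    induction k with
    | zero => simp
    | succ k ih =>
      rintro _ ⟨a, ha, _, ⟨i, hi, rfl⟩, rfl⟩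
      simp only [Finsupp.add_apply, Finset.sum_add_distrib, ih a ha, Finsupp.single_apply,
        Finset.sum_ite_eq, if_pos (Finset.mem_coe.1 hi)]
  rw [show (X '' (c : Set σ) : Set (MvPolynomial σ R)) =
      (monomial · 1) '' ((Finsupp.single · 1) '' c) by rw [Set.image_image]; rfl,
    span_monomial_pow, mem_ideal_span_monomial_image] at hf
  obtain ⟨e, he, hle⟩ := hf d hd
  exact hweight n e he ▸ Finset.sum_le_sum fun i _ => hle i

theorem support_mul_monomial_one (p : MvPolynomial σ R) (m : σ →₀ ℕ) :
    (p * monomial m 1).support = p.support.map (addRightEmbedding m) :=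
  AddMonoidAlgebra.support_coeff_mul_single p _ (by simp) _

end CommSemiring

theorem isPrime_span_X_image [CommRing R] [IsDomain R] (s : Set σ) :
    (Ideal.span (X '' s : Set (MvPolynomial σ R))).IsPrime := by
  classical
  set φ : MvPolynomial σ R →ₐ[R] MvPolynomial σ R := aeval fun i => if i ∈ s then 0 else X i
  suffices RingHom.ker φ = Ideal.span (X '' s) from this ▸ RingHom.ker_isPrime φ
  -- `φ` kills exactly the variables in `s`, so it is the identity modulo `span (X '' s)`.
  have hφ : (Ideal.Quotient.mkₐ R (Ideal.span (X '' s))).comp φ = Ideal.Quotient.mkₐ R _ := by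
    ext i
    by_cases hi : i ∈ s
    · simpa [φ, hi] using
        (Ideal.Quotient.eq_zero_iff_mem.2 (Ideal.subset_span (Set.mem_image_of_mem X hi))).symm
    · simp [φ, hi]
  refine le_antisymm (fun f hf => ?_) (Ideal.span_le.2 ?_)
  · have hf : φ f = 0 := hf
    rw [← Ideal.Quotient.eq_zero_iff_mem, ← Ideal.Quotient.mkₐ_eq_mk R, ← hφ, AlgHom.comp_apply,
      hf, map_zero]
  · rintro _ ⟨i, hi, rfl⟩
    simp [φ, hi]

end MvPolynomial

namespace Finsupp

variable {α : Type*}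

theorem sum_single_one_le {d : α →₀ ℕ} {t : Finset α} (h : ∀ a ∈ t, d a ≠ 0) :
    ∑ a ∈ t, single a 1 ≤ d := by
  classical
  intro b
  rw [finsetSum_apply]
  simp only [single_apply, Finset.sum_ite_eq']
  split_ifs with hb
  · exact Nat.one_le_iff_ne_zero.2 (h b hb)
  · exact Nat.zero_le _

theorem single_add_single_le {d : α →₀ ℕ} {a b : α} (hab : a ≠ b) (ha : d a ≠ 0) (hb : d b ≠ 0) :
    single a 1 + single b 1 ≤ d := by
  classical
  simpa [Finset.sum_pair hab] using sum_single_one_le (t := {a, b}) (by simp [ha, hb])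

theorem sum_single_add_single_le_one {t : Finset α} {a b : α} (h : ¬(a ∈ t ∧ b ∈ t)) :
    ∑ i ∈ t, (single a 1 + single b 1 : α →₀ ℕ) i ≤ 1 := by
  classical
  simp only [add_apply, Finset.sum_add_distrib, single_apply, Finset.sum_ite_eq]
  split_ifs <;> simp_all

end Finsupp

namespace SimpleGraph

variable {V : Type*} {G H : SimpleGraph V}

def restrict (G : SimpleGraph V) (s : Set V) : SimpleGraph V where
  Adj u v := G.Adj u v ∧ u ∈ s ∧ v ∈ s
  symm := ⟨fun _ _ h => ⟨h.1.symm, h.2.2, h.2.1⟩⟩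
  loopless := ⟨fun _ h => h.1.ne rfl⟩

@[simp]
lemma restrict_adj {s : Set V} {u v : V} : (G.restrict s).Adj u v ↔ G.Adj u v ∧ u ∈ s ∧ v ∈ s :=
  Iff.rfl

lemma restrict_le (s : Set V) : G.restrict s ≤ G := fun _ _ h => h.1

lemma IsVertexCover.union_compl_of_restrict {s c : Set V} (hc : (G.restrict s).IsVertexCover c) :
    G.IsVertexCover (c ∪ sᶜ) := by
  intro u v huv
  by_cases hu : u ∈ s
  · by_cases hv : v ∈ s
    · exact (hc (restrict_adj.2 ⟨huv, hu, hv⟩)).imp Or.inl Or.inl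
    · exact Or.inr (Or.inr hv)
  · exact Or.inl (Or.inr hu)

lemma IsVertexCover.erase [DecidableEq V] {c : Finset V} (hc : G.IsVertexCover c) {u : V}
    (hu : ∀ w, G.Adj u w → w ∈ c) : G.IsVertexCover (c.erase u) := by
  intro a b hab
  simp only [Finset.coe_erase, Set.mem_sdiff, Finset.mem_coe, Set.mem_singleton_iff]
  by_cases ha : a = u
  · subst ha
    exact Or.inr ⟨hu b hab, hab.ne'⟩
  by_cases hb : b = u
  · subst hb
    exact Or.inl ⟨hu a hab.symm, hab.ne⟩
  exact (hc hab).imp (⟨·, ha⟩) (⟨·, hb⟩)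

lemma IsVertexCover.exists_subset_not_and {c : Finset V} (hc : G.IsVertexCover c) {u v : V}
    (hleaf : ∀ w, G.Adj u w → w = v) :
    ∃ c' ⊆ c, G.IsVertexCover c' ∧ ¬(u ∈ c' ∧ v ∈ c') := by
  classical
  by_cases huv : u ∈ c ∧ v ∈ c
  · exact ⟨c.erase u, c.erase_subset u, hc.erase fun w hw => hleaf w hw ▸ huv.2,
      fun h => c.notMem_erase u h.1⟩
  · exact ⟨c, subset_rfl, hc, huv⟩

lemma exists_adj_notMem_of_minimal_isVertexCover {c : Finset V}
    (hc : Minimal (fun c : Finset V => G.IsVertexCover c) c) {v : V} (hv : v ∈ c) :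
    ∃ w, G.Adj v w ∧ w ∉ c := by
  classical
  by_contra! h
  exact c.notMem_erase v (hc.2 (hc.1.erase h) (c.erase_subset v) hv)

lemma IsAcyclic.exists_adj_forall_adj_eq [Finite V] (hG : G.IsAcyclic) (hne : G ≠ ⊥) :
    ∃ u v, G.Adj u v ∧ ∀ w, G.Adj u w → w = v := by
  obtain ⟨a, b, hab⟩ : ∃ a b, G.Adj a b := by
    by_contra! h
    exact hne (eq_bot_iff_forall_not_adj.2 h)
  have : Nonempty V := ⟨a⟩
  -- The first vertex of a longest path is a leaf.
  obtain ⟨u, v, p, hp, hmax⟩ := Walk.exists_isPath_forall_isPath_length_le_length G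
  have hnil : ¬p.Nil := fun h => by
    simpa [Walk.length_eq_zero_iff.2 h] using hmax a b hab.toWalk (Walk.IsPath.of_adj hab)
  refine ⟨u, p.snd, p.adj_snd hnil, fun w hw => hG.eq_snd_of_adj_start hp hw ?_⟩
  by_contra hwp
  simpa using hmax w v (p.cons hw.symm) (hp.cons hwp)

lemma le_sum_of_isVertexCover_restrict_support [Fintype V] {d : V →₀ ℕ} {s : ℕ}
    (hcover : ∀ c : Finset V, G.IsVertexCover c → s ≤ ∑ v ∈ c, d v) {c : Finset V}
    (hc : (G.restrict d.support).IsVertexCover c) : s ≤ ∑ v ∈ c, d v := by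
  classical
  have hsum : ∑ v ∈ c ∪ d.supportᶜ, d v = ∑ v ∈ c, d v :=
    (Finset.sum_subset Finset.subset_union_left fun v hv hvc => by simp_all).symm
  exact hsum ▸ hcover _ (by simpa using hc.union_compl_of_restrict)

/-- The exponents of the generators `X u * X v` of the edge ideal. -/
def edgeDegrees (G : SimpleGraph V) : Set (V →₀ ℕ) :=
  {e | ∃ u v, G.Adj u v ∧ e = Finsupp.single u 1 + Finsupp.single v 1}

lemma edgeDegrees_mono (h : G ≤ H) : G.edgeDegrees ⊆ H.edgeDegrees :=
  fun _ ⟨u, v, huv, he⟩ => ⟨u, v, h huv, he⟩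

theorem exists_mem_nsmul_edgeDegrees_le [Fintype V] (d : V →₀ ℕ)
    (hG : (G.restrict d.support).IsAcyclic) (s : ℕ)
    (hcover : ∀ c : Finset V, G.IsVertexCover c → s ≤ ∑ v ∈ c, d v) :
    ∃ e ∈ s • G.edgeDegrees, e ≤ d := by
  induction s generalizing G d with
  | zero => exact ⟨0, by simp, zero_le⟩
  | succ s ih =>
    set A := G.restrict d.support
    obtain ⟨u, v, huv, hleaf⟩ := hG.exists_adj_forall_adj_eq fun hA => by
      simpa using le_sum_of_isVertexCover_restrict_support hcover (c := ∅) (by simp [A, hA])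
    set d' := d - (Finsupp.single u 1 + Finsupp.single v 1)
    have hd : d = d' + (Finsupp.single u 1 + Finsupp.single v 1) :=
      (tsub_add_cancel_of_le (Finsupp.single_add_single_le huv.1.ne
        (Finsupp.mem_support_iff.1 huv.2.1) (Finsupp.mem_support_iff.1 huv.2.2))).symm
    -- A cover of `A` may drop one end of the leaf edge `uv`, which then costs at most `1`.
    have hcover' : ∀ c : Finset V, A.IsVertexCover c → s ≤ ∑ v ∈ c, d' v := by
      intro c hc
      obtain ⟨c', hc'c, hc', hnot⟩ := hc.exists_subset_not_and hleaf
      have hsplit : ∑ w ∈ c', d w =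
          ∑ w ∈ c', d' w + ∑ w ∈ c', (Finsupp.single u 1 + Finsupp.single v 1 : V →₀ ℕ) w := by
        conv_lhs => rw [hd]
        simp only [Finsupp.add_apply, Finset.sum_add_distrib]
      have hedge := Finsupp.sum_single_add_single_le_one hnot
      have hmono : ∑ w ∈ c', d' w ≤ ∑ w ∈ c, d' w := Finset.sum_le_sum_of_subset hc'c
      have := le_sum_of_isVertexCover_restrict_support hcover hc'
      omega
    obtain ⟨e, he, hle⟩ := ih d' (hG.anti (restrict_le _)) hcover'
    refine ⟨e + (Finsupp.single u 1 + Finsupp.single v 1), ?_, hd ▸ add_le_add_left hle _⟩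
    rw [succ_nsmul]
    exact Set.add_mem_add (Set.nsmul_subset_nsmul_left (edgeDegrees_mono (restrict_le _)) he)
      ⟨u, v, huv.1, rfl⟩

lemma sum_range_single_mem_nsmul_edgeDegrees (y : ℕ → V) {s : ℕ}
    (hadj : ∀ i < s, G.Adj (y (2 * i)) (y (2 * i + 1))) :
    ∑ j ∈ Finset.range (2 * s), Finsupp.single (y j) 1 ∈ s • G.edgeDegrees := by
  induction s with
  | zero => simp
  | succ s ih =>
    rw [show 2 * (s + 1) = 2 * s + 1 + 1 by ring, Finset.sum_range_succ, Finset.sum_range_succ,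
      add_assoc, succ_nsmul]
    exact Set.add_mem_add (ih fun i hi => hadj i (by omega)) ⟨_, _, hadj s (by omega), rfl⟩

theorem exists_mem_nsmul_edgeDegrees_le_of_injOn (y : ℕ → V) {s : ℕ}
    (hadj : ∀ i < s, G.Adj (y (2 * i)) (y (2 * i + 1))) (hy : Set.InjOn y (Finset.range (2 * s)))
    {d : V →₀ ℕ} (hd : ∀ j < 2 * s, d (y j) ≠ 0) :
    ∃ e ∈ s • G.edgeDegrees, e ≤ d := by
  classical
  refine ⟨_, sum_range_single_mem_nsmul_edgeDegrees y hadj, ?_⟩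
  rw [← Finset.sum_image (f := fun v => Finsupp.single v 1) hy]
  refine Finsupp.sum_single_one_le fun v hv => ?_
  obtain ⟨j, hj, rfl⟩ := Finset.mem_image.1 hv
  exact hd j (Finset.mem_range.1 hj)

end SimpleGraph

open SimpleGraph

section UniqueOddCycle

variable {V : Type*} {G : SimpleGraph V} {n : ℕ} {x : Fin (2 * n + 1) → V}

theorem HasUniqueOddCycle.isAcyclic_restrict (h : HasUniqueOddCycle G n x) {s : Set V}
    {i : Fin (2 * n + 1)} (hi : x i ∉ s) : (G.restrict s).IsAcyclic := by
  intro v c hc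
  have hmem : s(x i, x (i + 1)) ∈ (c.mapLe (restrict_le s)).edges :=
    (Set.ext_iff.1 (h.2.2.2 v _ (hc.mapLe (restrict_le s))) _).2 ⟨i, rfl⟩
  rw [Walk.edges_mapLe_eq_edges] at hmem
  exact hi (c.adj_of_mem_edges hmem).2.1

open Fin.NatCast in
theorem exists_mem_nsmul_edgeDegrees_le_of_cycle (hx : Function.Injective x)
    (hadj : ∀ i, G.Adj (x i) (x (i + 1))) {s : ℕ} (hs : s ≤ n) {d : V →₀ ℕ}
    (hd : ∀ i, d (x i) ≠ 0) : ∃ e ∈ s • G.edgeDegrees, e ≤ d := by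
  refine exists_mem_nsmul_edgeDegrees_le_of_injOn (fun j : ℕ => x j) (fun i _ => ?_)
    (fun j hj j' hj' hjj' => ?_) fun j _ => hd _
  · rw [Nat.cast_succ]
    exact hadj _
  · simp only [Finset.coe_range, Set.mem_Iio] at hj hj'
    simpa [Fin.ext_iff, Fin.val_natCast, Nat.mod_eq_of_lt (show j < 2 * n + 1 by omega),
      Nat.mod_eq_of_lt (show j' < 2 * n + 1 by omega)] using hx hjj'

end UniqueOddCycle

section SymbolicPower

variable {R : Type*} [CommRing R]

theorem le_of_mem_associatedPrimes_quotient {I p : Ideal R}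
    (hp : p ∈ associatedPrimes R (R ⧸ I)) : I ≤ p := by
  simpa [Submodule.annihilator_top, Ideal.annihilator_quotient] using hp.annihilator_le

theorem pow_le_symbolicPower (I : Ideal R) (s : ℕ) : I ^ s ≤ symbolicPower I s :=
  le_iInf₂ fun _ hp => Ideal.pow_right_mono (le_of_mem_associatedPrimes_quotient hp) s

end SymbolicPower

section EdgeIdeal

variable {K : Type*} [Field K] {V : Type*} {G : SimpleGraph V}

theorem edgeIdeal_eq_span_monomial :
    edgeIdeal K G = Ideal.span ((monomial · (1 : K)) '' G.edgeDegrees) := by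
  rw [edgeIdeal]
  congr 1
  ext f
  simp [edgeDegrees, X, monomial_mul, eq_comm]

theorem span_X_image_mem_associatedPrimes [Fintype V] {c : Finset V}
    (hc : Minimal (fun c : Finset V => G.IsVertexCover c) c) :
    Ideal.span (X '' (c : Set V)) ∈
      associatedPrimes (MvPolynomial V K) (MvPolynomial V K ⧸ edgeIdeal K G) := by
  classical
  set m : V →₀ ℕ := Finsupp.indicator cᶜ fun _ _ => 1
  have hm : ∀ w, m w = if w ∈ c then 0 else 1 := fun w => by
    by_cases hw : w ∈ c <;> simp [m, Finsupp.indicator_apply, hw]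
  have hprime := isPrime_span_X_image (R := K) (c : Set V)
  refine ⟨hprime, Ideal.Quotient.mk _ (monomial m 1), ?_⟩
  suffices (⊥ : Submodule _ (MvPolynomial V K ⧸ edgeIdeal K G)).colon
      {Ideal.Quotient.mk _ (monomial m 1)} = Ideal.span (X '' (c : Set V)) by
    rw [this, hprime.radical]
  ext r
  rw [Submodule.mem_colon_singleton, Submodule.mem_bot]
  change Ideal.Quotient.mk _ (r * monomial m 1) = 0 ↔ _
  rw [Ideal.Quotient.eq_zero_iff_mem, edgeIdeal_eq_span_monomial, mem_ideal_span_monomial_image,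
    mem_ideal_span_X_image, support_mul_monomial_one]
  simp only [Finset.mem_map, addRightEmbedding_apply, forall_exists_index, and_imp,
    forall_apply_eq_imp_iff₂]
  refine forall₂_congr fun e _ => ⟨?_, ?_⟩
  · rintro ⟨_, ⟨a, b, hab, rfl⟩, hle⟩
    rcases hc.1 hab with ha | hb
    · refine ⟨a, ha, fun hea => ?_⟩
      simpa [hm, Finset.mem_coe.1 ha, hea] using hle a
    · refine ⟨b, hb, fun heb => ?_⟩
      simpa [hm, Finset.mem_coe.1 hb, heb] using hle b
  · rintro ⟨i, hi, hei⟩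
    obtain ⟨w, hiw, hw⟩ := exists_adj_notMem_of_minimal_isVertexCover hc hi
    exact ⟨_, ⟨i, w, hiw, rfl⟩, Finsupp.single_add_single_le hiw.ne (by simp [hei])
      (by simp [hm, hw])⟩

theorem le_sum_of_mem_symbolicPower [Fintype V] {s : ℕ} {f : MvPolynomial V K}
    (hf : f ∈ symbolicPower (edgeIdeal K G) s) {d : V →₀ ℕ} (hd : d ∈ f.support) {c : Finset V}
    (hc : G.IsVertexCover c) : s ≤ ∑ v ∈ c, d v := by
  obtain ⟨c₀, hc₀c, hc₀⟩ := exists_minimal_le_of_wellFoundedLT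
    (fun c : Finset V => G.IsVertexCover (c : Set V)) c hc
  have hf₀ := (Submodule.mem_iInf _).1 ((Submodule.mem_iInf _).1 hf _)
    (span_X_image_mem_associatedPrimes hc₀)
  exact (le_sum_of_mem_span_X_image_pow hf₀ hd).trans (Finset.sum_le_sum_of_subset hc₀c)

end EdgeIdeal

theorem symbolicPower_eq_pow_of_le_general {K : Type*} [Field K] {V : Type*} [Fintype V] (n : ℕ)
    (G : SimpleGraph V) (x : Fin (2 * n + 1) → V) (huni : HasUniqueOddCycle G n x)
    (I : Ideal (MvPolynomial V K)) (hI : I = edgeIdeal K G)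
    (s : ℕ) (h2 : s ≤ n) :
    symbolicPower I s = I ^ s := by
  subst hI
  refine le_antisymm (fun f hf => ?_) (pow_le_symbolicPower _ s)
  rw [edgeIdeal_eq_span_monomial, span_monomial_pow, mem_ideal_span_monomial_image]
  intro d hd
  by_cases hcycle : ∀ i, d (x i) ≠ 0
  · exact exists_mem_nsmul_edgeDegrees_le_of_cycle huni.2.1 huni.2.2.1 h2 hcycle
  · obtain ⟨i, hi⟩ := not_forall.1 hcycle
    exact exists_mem_nsmul_edgeDegrees_le d (huni.isAcyclic_restrict (by simpa using hi)) s
      fun c hc => le_sum_of_mem_symbolicPower hf hd hc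

theorem symbolicPower_eq_pow_of_le {K : Type*} [Field K] {V : Type*} [Fintype V] (n : ℕ)
    (G : SimpleGraph V) (x : Fin (2 * n + 1) → V) (huni : HasUniqueOddCycle G n x)
    (I : Ideal (MvPolynomial V K)) (hI : I = edgeIdeal K G)
    (s : ℕ) (h1 : 1 ≤ s) (h2 : s ≤ n) :
    symbolicPower I s = I ^ s :=
  symbolicPower_eq_pow_of_le_general n G x huni I hI s h2
end
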